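/- arXiv:2511.11327 — 4 statements merged into one kernel-verified Lean document; each statement's English description precedes it below -/
import Mathlib

section
/- Let D be a triangulated category and let D₁ ⊆ D be a full triangulated subcategory whose inclusion functor i_* : D₁ → D (fully faithful) admits a left adjoint i^*. Then the inclusion functor j_! : ⊥D₁ → D of the left orthogonal admits a right adjoint j^*, and for every object A of D there is a distinguished triangle j_! j^* A → A → i_* i^* A → (j_! j^* A)[1], functorial in A, whose second map is the unit of the adjunction i^* ⊣ i_* and whose first map is the counit of the adjunction j_! ⊣ j^*. -/
/-!
Complete the unit `η_A : A ⟶ i_* i^* A` to a distinguished triangle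
`C_A ⟶ A ⟶ i_* i^* A ⟶ C_A⟦1⟧`. Precomposition with `η_A` is bijective on maps into `D₁`,
and `D₁` is closed under shifts, so the long exact `Hom(-, B)` sequence (`B ∈ D₁`) gives
`C_A ∈ ⊥D₁`, while the long exact `Hom(X, -)` sequence (`X ∈ ⊥D₁`) shows that composition with
`C_A ⟶ A` is bijective. Thus `C_A ⟶ A` is a coreflection of `A` into `⊥D₁`; these assemble into
the right adjoint `j^*` with counit `C_A ⟶ A`. The connecting maps are natural because the
morphism of triangles extending `j^* α` and `α` must be `i_* i^* α` on the third objects.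
-/

open CategoryTheory CategoryTheory.Limits CategoryTheory.Pretriangulated

noncomputable section

universe v u

namespace CategoryTheory

theorem Adjunction.unit_comp_bijective {C E : Type*} [Category C] [Category E]
    {F : C ⥤ E} {G : E ⥤ C} (adj : F ⊣ G) (hG : G.FullyFaithful) (A : C) (Y : E) :
    Function.Bijective (fun k : G.obj (F.obj A) ⟶ G.obj Y => adj.unit.app A ≫ k) := by
  refine (Function.Bijective.of_comp_iff _ (hG.map_bijective (F.obj A) Y)).mp ?_
  exact (adj.homEquiv A Y).bijective

namespace ObjectProperty

variable {C : Type*} [Category C] (Q : ObjectProperty C) {R : C → C} (hR : ∀ A, Q (R A))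
  (ε : ∀ A, R A ⟶ A)
  (hε : ∀ (X : Q.FullSubcategory) (A : C), Function.Bijective (fun g : X.obj ⟶ R A => g ≫ ε A))

def coreflectionHomEquiv (X : Q.FullSubcategory) (A : C) :
    (Q.ι.obj X ⟶ A) ≃ (X ⟶ ⟨R A, hR A⟩) :=
  (Equiv.ofBijective _ (hε X A)).symm.trans
    (Q.fullyFaithfulι.homEquiv (X := X) (Y := ⟨R A, hR A⟩)).symm

theorem coreflectionHomEquiv_symm_apply (X : Q.FullSubcategory) (A : C)
    (g : X ⟶ ⟨R A, hR A⟩) : (coreflectionHomEquiv Q hR ε hε X A).symm g = g.hom ≫ ε A :=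
  rfl

theorem coreflectionHomEquiv_naturality (X' X : Q.FullSubcategory) (A : C) (f : X' ⟶ X)
    (g : Q.ι.obj X ⟶ A) :
    coreflectionHomEquiv Q hR ε hε X' A (Q.ι.map f ≫ g) =
      f ≫ coreflectionHomEquiv Q hR ε hε X A g := by
  rw [← Equiv.eq_symm_apply, coreflectionHomEquiv_symm_apply, InducedCategory.comp_hom,
    Category.assoc, ← coreflectionHomEquiv_symm_apply Q hR ε hε, Equiv.symm_apply_apply, ι_map]

def rightAdjointOfCoreflections : C ⥤ Q.FullSubcategory :=
  Adjunction.rightAdjointOfEquiv (coreflectionHomEquiv Q hR ε hε)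
    (coreflectionHomEquiv_naturality Q hR ε hε)

def adjunctionOfCoreflections : Q.ι ⊣ rightAdjointOfCoreflections Q hR ε hε :=
  Adjunction.adjunctionOfEquivRight _ _

theorem adjunctionOfCoreflections_counit_app (A : C) :
    (adjunctionOfCoreflections Q hR ε hε).counit.app A = ε A := by
  simp only [adjunctionOfCoreflections, Adjunction.adjunctionOfEquivRight_counit_app,
    coreflectionHomEquiv_symm_apply]
  exact Category.id_comp _

theorem rightAdjointOfCoreflections_map_hom_comp {A A' : C} (α : A ⟶ A') :
    ((rightAdjointOfCoreflections Q hR ε hε).map α).hom ≫ ε A' = ε A ≫ α := by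
  have h := (adjunctionOfCoreflections Q hR ε hε).counit.naturality α
  rw [adjunctionOfCoreflections_counit_app, adjunctionOfCoreflections_counit_app] at h
  exact h

end ObjectProperty

end CategoryTheory

namespace CategoryTheory.Pretriangulated.Triangle

variable {C : Type*} [Category C] [Preadditive C] [HasZeroObject C] [HasShift C ℤ]
  [∀ n : ℤ, (CategoryTheory.shiftFunctor C n).Additive] [Pretriangulated C] {T : Triangle C}

theorem comp_mor₁_bijective (hT : T ∈ distTriang C) {X : C} (h₃ : ∀ f : X ⟶ T.obj₃, f = 0)
    (h₃' : ∀ f : X ⟶ T.obj₃⟦(-1 : ℤ)⟧, f = 0) :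
    Function.Bijective (fun g : X ⟶ T.obj₁ => g ≫ T.mor₁) := by
  refine ⟨fun g g' hgg' => ?_, fun f => ?_⟩
  · have hsub : (g - g') ≫ T.mor₁ = 0 := by rw [Preadditive.sub_comp, sub_eq_zero]; exact hgg'
    obtain ⟨h, hh⟩ := coyoneda_exact₂ _ (inv_rot_of_distTriang _ hT) (g - g') hsub
    exact sub_eq_zero.mp (hh.trans (by rw [h₃' h]; exact zero_comp))
  · obtain ⟨g, hg⟩ := coyoneda_exact₂ _ hT f (h₃ _)
    exact ⟨g, hg.symm⟩

theorem obj₁_hom_eq_zero (hT : T ∈ distTriang C) {B : C}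
    (hsurj : Function.Surjective (fun g : T.obj₃ ⟶ B => T.mor₂ ≫ g))
    (hinj : Function.Injective (fun g : T.obj₃ ⟶ B⟦(1 : ℤ)⟧ => T.mor₂ ≫ g))
    (f : T.obj₁ ⟶ B) : f = 0 := by
  have hδf : T.mor₃ ≫ f⟦(1 : ℤ)⟧' = 0 :=
    hinj (by simp [comp_distTriang_mor_zero₂₃_assoc _ hT])
  obtain ⟨g, hg⟩ : ∃ g : T.obj₂⟦(1 : ℤ)⟧ ⟶ B⟦(1 : ℤ)⟧, f⟦(1 : ℤ)⟧' = -T.mor₁⟦(1 : ℤ)⟧' ≫ g := by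
    obtain ⟨g, hg⟩ := yoneda_exact₃ _ (rot_of_distTriang _ hT) _ hδf
    exact ⟨g, hg.trans (Preadditive.neg_comp (T.mor₁⟦(1 : ℤ)⟧') g)⟩
  obtain ⟨g', rfl⟩ := (CategoryTheory.shiftFunctor C (1 : ℤ)).map_surjective g
  obtain ⟨k, rfl⟩ := hsurj g'
  have hf : f = -(T.mor₁ ≫ T.mor₂ ≫ k) :=
    (CategoryTheory.shiftFunctor C (1 : ℤ)).map_injective (by simp [hg])
  simp [hf, comp_distTriang_mor_zero₁₂_assoc _ hT]

end CategoryTheory.Pretriangulated.Triangle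

namespace CategoryTheory.Pretriangulated

variable {C : Type*} [Category C] [Preadditive C] [HasZeroObject C] [HasShift C ℤ]
  [∀ n : ℤ, (CategoryTheory.shiftFunctor C n).Additive] [Pretriangulated C]

theorem unit_triangle_mor₃_naturality {E : Type*} [Category E] {F : C ⥤ E} {G : E ⥤ C}
    (adj : F ⊣ G) (hG : G.FullyFaithful) {A A' X X' : C} {p : X ⟶ A} {p' : X' ⟶ A'}
    {δ : G.obj (F.obj A) ⟶ X⟦(1 : ℤ)⟧} {δ' : G.obj (F.obj A') ⟶ X'⟦(1 : ℤ)⟧}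
    (hT : Triangle.mk p (adj.unit.app A) δ ∈ distTriang C)
    (hT' : Triangle.mk p' (adj.unit.app A') δ' ∈ distTriang C)
    (a : X ⟶ X') (α : A ⟶ A') (hα : p ≫ α = a ≫ p') :
    G.map (F.map α) ≫ δ' = δ ≫ a⟦(1 : ℤ)⟧' := by
  obtain ⟨c, hc₂, hc₃⟩ := complete_distinguished_triangle_morphism _ _ hT hT' a α hα
  have hc : c = G.map (F.map α) :=
    (adj.unit_comp_bijective hG A (F.obj A')).injective (hc₂.trans (adj.unit_naturality α).symm)
  rw [← hc]
  exact hc₃.symm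

end CategoryTheory.Pretriangulated

theorem gluing_triangle_left_adjoint
    {D : Type u} [Category.{v} D] [Preadditive D] [HasZeroObject D] [HasShift D ℤ]
    [∀ n : ℤ, (CategoryTheory.shiftFunctor D n).Additive] [Pretriangulated D]
    [IsTriangulated D]
    (P : D → Prop)
    (hP_zero : ∀ X : D, IsZero X → P X)
    (hP_iso : ∀ {X Y : D}, (X ≅ Y) → P X → P Y)
    (hP_shift : ∀ (X : D) (n : ℤ), P X → P (X⟦n⟧))
    (hP_ext : ∀ T ∈ distTriang D, P T.obj₁ → P T.obj₃ → P T.obj₂)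
    (istar : D ⥤ ObjectProperty.FullSubcategory P)
    (adji : istar ⊣ ObjectProperty.ι P) :
    ∃ (jstar : D ⥤ ObjectProperty.FullSubcategory fun A : D => ∀ B : D, P B → ∀ f : A ⟶ B, f = 0)
      (adjj : ObjectProperty.ι (fun A : D => ∀ B : D, P B → ∀ f : A ⟶ B, f = 0) ⊣ jstar)
      (δ : istar ⋙ ObjectProperty.ι P ⟶
        (jstar ⋙ ObjectProperty.ι
            (fun A : D => ∀ B : D, P B → ∀ f : A ⟶ B, f = 0)) ⋙
          CategoryTheory.shiftFunctor D (1 : ℤ)),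
      ∀ A : D,
        Triangle.mk (adjj.counit.app A) (adji.unit.app A) (δ.app A) ∈ distTriang D := by
  let Q : ObjectProperty D := fun A => ∀ B : D, P B → ∀ f : A ⟶ B, f = 0
  choose C p δ hT using fun A => distinguished_cocone_triangle₁ (adji.unit.app A)
  have hunit := adji.unit_comp_bijective (ObjectProperty.fullyFaithfulι P)
  have hC (A : D) : Q (C A) := fun B hB f =>
    Triangle.obj₁_hom_eq_zero (hT A) (hunit A ⟨B, hB⟩).2 (hunit A ⟨_, hP_shift B 1 hB⟩).1 f
  have hp (X : Q.FullSubcategory) (A : D) : Function.Bijective (fun g : X.obj ⟶ C A => g ≫ p A) :=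
    Triangle.comp_mor₁_bijective (hT A) (X.property _ (istar.obj A).property)
      (X.property _ (hP_shift _ (-1) (istar.obj A).property))
  refine ⟨_, Q.adjunctionOfCoreflections hC p hp, ⟨δ, fun A A' α => ?_⟩, fun A => ?_⟩
  · exact unit_triangle_mor₃_naturality adji (ObjectProperty.fullyFaithfulι P) (hT A) (hT A') _ α
      (Q.rightAdjointOfCoreflections_map_hom_comp hC p hp α).symm
  · rw [Q.adjunctionOfCoreflections_counit_app hC p hp]
    exact hT A

end
end

section
/- Let D be a triangulated category and let D₁ ⊆ D be a full triangulated subcategory whose inclusion functor i_* : D₁ → D (fully faithful) admits a right adjoint i^!. Then the inclusion functor j_* : D₁^⊥ → D of the right orthogonal admits a left adjoint j^*, and for every object A of D there is a distinguished triangle i_* i^! A → A → j_* j^* A → (i_* i^! A)[1], functorial in A, whose first map is the counit of the adjunction i_* ⊣ i^! and whose second map is the unit of the adjunction j^* ⊣ j_*. -/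
/-!
Complete the counit `ε_A : i_* i^! A ⟶ A` to a distinguished triangle
`i_* i^! A ⟶ A ⟶ Q A ⟶ (i_* i^! A)⟦1⟧`. Since composition with `ε_A` is bijective on maps out of
objects of `D₁`, and `D₁` is stable under shifts, the long exact `Hom(B, -)`-sequence forces
`Hom(B, Q A) = 0` for `B ∈ D₁`. Dually, for `Y ∈ D₁^⊥` the `Hom(-, Y)`-sequence shows that every map
`A ⟶ Y` factors uniquely through `A ⟶ Q A`, so these maps are universal arrows and assemble into
a left adjoint `j^*` of the inclusion. Uniqueness of that factorisation also makes the third map of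
a morphism of such triangles unique, whence the connecting maps are natural.
-/

open CategoryTheory CategoryTheory.Limits CategoryTheory.Pretriangulated

noncomputable section

universe v u

namespace CategoryTheory

lemma Adjunction.comp_counit_app_bijective {C E : Type*} [Category C] [Category E]
    {L : C ⥤ E} {R : E ⥤ C} (adj : L ⊣ R) [L.Full] [L.Faithful] (X : C) (A : E) :
    Function.Bijective fun g : L.obj X ⟶ L.obj (R.obj A) => g ≫ adj.counit.app A := by
  have : (fun g : L.obj X ⟶ L.obj (R.obj A) => g ≫ adj.counit.app A) =
      (adj.homEquiv X A).symm ∘ (Functor.FullyFaithful.ofFullyFaithful L).homEquiv.symm := by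
    funext g
    simp [Adjunction.homEquiv_counit]
  rw [this]
  exact (adj.homEquiv X A).symm.bijective.comp
    (Functor.FullyFaithful.ofFullyFaithful L).homEquiv.symm.bijective

section UniversalArrows

variable {C E : Type*} [Category C] [Category E] (R : C ⥤ E) (F : E → C)
  (η : ∀ A, A ⟶ R.obj (F A)) (hη : ∀ A Y, Function.Bijective fun g : F A ⟶ Y => η A ≫ R.map g)

def leftAdjointOfUniversalArrows : E ⥤ C :=
  Adjunction.leftAdjointOfEquiv (fun A Y => Equiv.ofBijective _ (hη A Y))
    (fun _ _ _ _ _ => by simp)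

def adjunctionOfUniversalArrows : leftAdjointOfUniversalArrows R F η hη ⊣ R :=
  Adjunction.adjunctionOfEquivLeft _ _

@[simp]
lemma adjunctionOfUniversalArrows_unit_app (A : E) :
    (adjunctionOfUniversalArrows R F η hη).unit.app A = η A := by
  show η A ≫ R.map (𝟙 _) = η A
  simp

lemma universalArrows_naturality {A A' : E} (f : A ⟶ A') :
    η A ≫ R.map ((leftAdjointOfUniversalArrows R F η hη).map f) = f ≫ η A' := by
  simp only [leftAdjointOfUniversalArrows, Adjunction.leftAdjointOfEquiv_map,
    Equiv.ofBijective_apply, Functor.map_id, Category.comp_id]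
  exact (Equiv.ofBijective _ (hη A (F A'))).apply_symm_apply (f ≫ η A')

end UniversalArrows

namespace Pretriangulated.Triangle

variable {D : Type u} [Category.{v} D] [Preadditive D] [HasZeroObject D] [HasShift D ℤ]
  [∀ n : ℤ, (CategoryTheory.shiftFunctor D n).Additive] [Pretriangulated D]

lemma rightOrthogonal_obj₃_of_comp_mor₁_bijective {T : Triangle D} (hT : T ∈ distTriang D)
    (P : ObjectProperty D) (hP : ∀ X, P X → P (X⟦(-1 : ℤ)⟧))
    (hbij : ∀ B, P B → Function.Bijective fun g : B ⟶ T.obj₁ => g ≫ T.mor₁) :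
    P.rightOrthogonal T.obj₃ := by
  intro B f hB
  -- `f ≫ T.mor₃` is the shift of a map `B⟦-1⟧ ⟶ T.obj₁` killed by `T.mor₁`.
  have hf₃ : f ≫ T.mor₃ = 0 := by
    let e := (shiftFunctorCompIsoId D (-1 : ℤ) 1 (by omega)).app B
    obtain ⟨g, hg⟩ :=
      (CategoryTheory.shiftFunctor D (1 : ℤ)).map_surjective (e.hom ≫ f ≫ T.mor₃)
    have hg₁ : g ≫ T.mor₁ = 0 := by
      apply (CategoryTheory.shiftFunctor D (1 : ℤ)).map_injective
      simp [hg, comp_distTriang_mor_zero₃₁ _ hT]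
    obtain rfl : g = 0 := (hbij _ (hP B hB)).1 (hg₁.trans zero_comp.symm)
    simpa [e] using hg.symm
  obtain ⟨g, rfl⟩ := coyoneda_exact₃ T hT f hf₃
  obtain ⟨h, rfl⟩ := (hbij B hB).2 g
  simp [comp_distTriang_mor_zero₁₂ _ hT]

lemma comp_mor₂_bijective {T : Triangle D} (hT : T ∈ distTriang D) {Y : D}
    (h₁ : ∀ f : T.obj₁ ⟶ Y, f = 0) (h₁' : ∀ f : T.obj₁⟦(1 : ℤ)⟧ ⟶ Y, f = 0) :
    Function.Bijective fun g : T.obj₃ ⟶ Y => T.mor₂ ≫ g := by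
  refine ⟨(injective_iff_map_eq_zero (Preadditive.leftComp Y T.mor₂)).2 fun g hg => ?_,
    fun f => ?_⟩
  · obtain ⟨w, rfl⟩ := yoneda_exact₃ T hT g hg
    simp [h₁' w]
  · obtain ⟨g, rfl⟩ := yoneda_exact₂ T hT f (h₁ _)
    exact ⟨g, rfl⟩

lemma comm₃_of_comm₂ {T T' : Triangle D} (hT : T ∈ distTriang D) (hT' : T' ∈ distTriang D)
    (a : T.obj₁ ⟶ T'.obj₁) (b : T.obj₂ ⟶ T'.obj₂) (comm₁ : T.mor₁ ≫ b = a ≫ T'.mor₁)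
    (c : T.obj₃ ⟶ T'.obj₃) (comm₂ : T.mor₂ ≫ c = b ≫ T'.mor₂)
    (hinj : Function.Injective fun g : T.obj₃ ⟶ T'.obj₃ => T.mor₂ ≫ g) :
    T.mor₃ ≫ a⟦(1 : ℤ)⟧' = c ≫ T'.mor₃ := by
  obtain ⟨c', comm₂', comm₃'⟩ := complete_distinguished_triangle_morphism T T' hT hT' a b comm₁
  obtain rfl : c = c' := hinj (comm₂.trans comm₂'.symm)
  exact comm₃'

end Pretriangulated.Triangle

end CategoryTheory

theorem gluing_triangle_right_adjoint
    {D : Type u} [Category.{v} D] [Preadditive D] [HasZeroObject D] [HasShift D ℤ]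
    [∀ n : ℤ, (CategoryTheory.shiftFunctor D n).Additive] [Pretriangulated D]
    [IsTriangulated D]
    (P : D → Prop)
    (hP_zero : ∀ X : D, IsZero X → P X)
    (hP_iso : ∀ {X Y : D}, (X ≅ Y) → P X → P Y)
    (hP_shift : ∀ (X : D) (n : ℤ), P X → P (X⟦n⟧))
    (hP_ext : ∀ T ∈ distTriang D, P T.obj₁ → P T.obj₃ → P T.obj₂)
    (ishriek : D ⥤ ObjectProperty.FullSubcategory P)
    (adji : ObjectProperty.ι P ⊣ ishriek) :
    ∃ (jstar : D ⥤ ObjectProperty.FullSubcategory fun A : D => ∀ B : D, P B → ∀ f : B ⟶ A, f = 0)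
      (adjj : jstar ⊣ ObjectProperty.ι (fun A : D => ∀ B : D, P B → ∀ f : B ⟶ A, f = 0))
      (δ : (jstar ⋙ ObjectProperty.ι
              (fun A : D => ∀ B : D, P B → ∀ f : B ⟶ A, f = 0)) ⟶
        (ishriek ⋙ ObjectProperty.ι P) ⋙ CategoryTheory.shiftFunctor D (1 : ℤ)),
      ∀ A : D,
        Triangle.mk (adji.counit.app A) (adjj.unit.app A) (δ.app A) ∈ distTriang D := by
  set orth : ObjectProperty D := fun A => ∀ B : D, P B → ∀ f : B ⟶ A, f = 0
  choose Q π δ hT using fun A : D => distinguished_cocone_triangle (adji.counit.app A)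
  have hQ (A : D) : orth (Q A) := fun B hB f =>
    Triangle.rightOrthogonal_obj₃_of_comp_mor₁_bijective (hT A) P (fun X => hP_shift X (-1))
      (fun B hB => adji.comp_counit_app_bijective ⟨B, hB⟩ A) f hB
  have hπ (A : D) (Y : orth.FullSubcategory) :
      Function.Bijective fun g : Q A ⟶ Y.obj => π A ≫ g :=
    Triangle.comp_mor₂_bijective (hT A) (Y.property _ (ishriek.obj A).property)
      (Y.property _ (hP_shift _ 1 (ishriek.obj A).property))
  let adjj := adjunctionOfUniversalArrows orth.ι (fun A => ⟨Q A, hQ A⟩) π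
    (fun A Y => (hπ A Y).comp ((ObjectProperty.fullyFaithfulι orth).map_bijective _ _))
  refine ⟨_, adjj, { app := δ, naturality := fun A A' f => ?_ }, fun A => ?_⟩
  · exact (Triangle.comm₃_of_comm₂ (hT A) (hT A') _ f (adji.counit.naturality f).symm _
      (universalArrows_naturality orth.ι (fun A => ⟨Q A, hQ A⟩) π _ f) (hπ A ⟨Q A', hQ A'⟩).1).symm
  · rw [adjunctionOfUniversalArrows_unit_app]
    exact hT A
end
end

section
/- Let k ≥ 1 be an integer. The orbits of the right action of the principal congruence subgroup Γ_k on P^1(E) are precisely the following pairwise disjoint sets, which partition P^1(E): (a) the set {∞} ∪ {[1 : t] : t ∈ E^×, v(t) ≤ −k}; (b) the set {[1 : t] : t = 0 or v(t) ≥ k}; (c) for each integer i with −k < i < k and each coset s·(1 + π^{min(k−i, k+i)} O_E) of O_E^×/(1 + π^{min(k−i, k+i)} O_E), the set {[1 : π^i s u] : u ∈ 1 + π^{min(k−i, k+i)} O_E}. Consequently, the set of Γ_k-orbits on P^1(E) is in bijection with {∞} ∪ {0} ∪ ⨆_{i = −k+1}^{k−1} O_E^×/(1 + π^{min(k+i,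 k−i)} O_E). -/
noncomputable section

open Matrix

/-- A surjective discrete (rank-one) valuation on a field `E`, written additively.
This is the algebraic structure of a nonarchimedean local field used in the statements. -/
structure DiscreteVal (E : Type) [Field E] : Type where
  v : E → ℤ
  v_mul : ∀ x y : E, x ≠ 0 → y ≠ 0 → v (x * y) = v x + v y
  v_min_le_add : ∀ x y : E, x ≠ 0 → y ≠ 0 → x + y ≠ 0 → min (v x) (v y) ≤ v (x + y)
  surj : ∀ n : ℤ, ∃ x : E, x ≠ 0 ∧ v x = n

namespace DiscreteVal

variable {E : Type} [Field E]

/-- The valuation ring `O_E = {x : x = 0 or v x ≥ 0}`. -/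
def O (ν : DiscreteVal E) : Set E := {x : E | x = 0 ∨ 0 ≤ ν.v x}

/-- `π` is a uniformizer: `π ≠ 0` and `v π = 1`. -/
def IsUniformizer (ν : DiscreteVal E) (π : E) : Prop := π ≠ 0 ∧ ν.v π = 1

/-- The set `π^m · O_E` for `m : ℤ`. -/
def ball (ν : DiscreteVal E) (π : E) (m : ℤ) : Set E :=
  {y : E | ∃ z ∈ ν.O, y = π ^ m * z}

end DiscreteVal

section ProjLine

variable {E : Type} [Field E]

/-- The point `[a : b]` of the projective line over `E`. -/
def projPt (a b : E) (h : a ≠ 0 ∨ b ≠ 0) : Projectivization E (Fin 2 → E) :=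
  Projectivization.mk E ![a, b] (by
    intro hc
    rcases h with h | h
    · exact h (by simpa using congrFun hc 0)
    · exact h (by simpa using congrFun hc 1))

/-- The point `∞ = [0 : 1]`. -/
def inftyPt (E : Type) [Field E] : Projectivization E (Fin 2 → E) :=
  projPt 0 1 (Or.inr one_ne_zero)

/-- The point `[1 : t]`. -/
def onePt (t : E) : Projectivization E (Fin 2 → E) :=
  projPt 1 t (Or.inl one_ne_zero)

theorem vecMulLinear_injective (g : SpecialLinearGroup (Fin 2) E) :
    Function.Injective (g.1.vecMulLinear) := by
  intro x y hxy
  have h1 : x ᵥ* g.1 = y ᵥ* g.1 := by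
    simpa [Matrix.vecMulLinear_apply] using hxy
  have h3 : g.1 * (g⁻¹).1 = 1 := by
    rw [← Matrix.SpecialLinearGroup.coe_mul, mul_inv_cancel, Matrix.SpecialLinearGroup.coe_one]
  calc x = x ᵥ* (g.1 * (g⁻¹).1) := by rw [h3, Matrix.vecMul_one]
    _ = (x ᵥ* g.1) ᵥ* (g⁻¹).1 := (Matrix.vecMul_vecMul x g.1 (g⁻¹).1).symm
    _ = (y ᵥ* g.1) ᵥ* (g⁻¹).1 := by rw [h1]
    _ = y ᵥ* (g.1 * (g⁻¹).1) := Matrix.vecMul_vecMul y g.1 (g⁻¹).1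
    _ = y := by rw [h3, Matrix.vecMul_one]

/-- The right action `[w] · g := [w ᵥ* g]` of `SL₂(E)` on the projective line
(rows vectors times matrix). -/
def ract (x : Projectivization E (Fin 2 → E)) (g : SpecialLinearGroup (Fin 2) E) :
    Projectivization E (Fin 2 → E) :=
  Projectivization.map (g.1.vecMulLinear) (vecMulLinear_injective g) x

/-- The orbit of `x` under a set `Γ` of elements of `SL₂(E)` (acting on the right). -/
def orbitOf (Γ : Set (SpecialLinearGroup (Fin 2) E))
    (x : Projectivization E (Fin 2 → E)) : Set (Projectivization E (Fin 2 → E)) :=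
  {y | ∃ g ∈ Γ, y = ract x g}

variable (ν : DiscreteVal E) (π : E)

/-- The principal congruence subgroup `Γ_k` of level `k` (as a subset of `SL₂(E)`):
integral matrices congruent to the identity modulo `π^k`. -/
def congrSub (k : ℕ) : Set (SpecialLinearGroup (Fin 2) E) :=
  {g | ∀ i j, g.1 i j - (1 : Matrix (Fin 2) (Fin 2) E) i j ∈ ν.ball π (k : ℤ)}

/-- The maximal compact subgroup `U = SL₂(O_E)` (as a subset of `SL₂(E)`). -/
def slIntegral : Set (SpecialLinearGroup (Fin 2) E) :=
  {g | ∀ i j, g.1 i j ∈ ν.O}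

/-- The Iwahori subgroup `Γ₀` (as a subset): integral matrices whose
lower-left entry lies in `πO_E`. -/
def iwahori : Set (SpecialLinearGroup (Fin 2) E) :=
  {g | (∀ i j, g.1 i j ∈ ν.O) ∧ g.1 1 0 ∈ ν.ball π 1}

/-- The subgroup `U' = diag(1,π) SL₂(O_E) diag(1,π)⁻¹` (as a subset), described
by entry conditions. -/
def slConj : Set (SpecialLinearGroup (Fin 2) E) :=
  {g | g.1 0 0 ∈ ν.O ∧ g.1 1 1 ∈ ν.O ∧ g.1 0 1 ∈ ν.ball π (-1) ∧ g.1 1 0 ∈ ν.ball π 1}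

end ProjLine

section Statement3

variable {E : Type} [Field E]

/-- The set `{∞} ∪ {[1 : t] : v(t) ≤ −k}`. -/
def setA (ν : DiscreteVal E) (k : ℕ) : Set (Projectivization E (Fin 2 → E)) :=
  {inftyPt E} ∪ {y | ∃ t : E, t ≠ 0 ∧ ν.v t ≤ -(k : ℤ) ∧ y = onePt t}

/-- The set `{[1 : t] : t ∈ π^k O_E}`. -/
def setB (ν : DiscreteVal E) (π : E) (k : ℕ) : Set (Projectivization E (Fin 2 → E)) :=
  {y | ∃ t ∈ ν.ball π (k : ℤ), y = onePt t}

/-- The set `{[1 : π^i s u] : u ∈ 1 + π^{min(k−i,k+i)} O_E}`. -/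
def setC (ν : DiscreteVal E) (π : E) (k : ℕ) (i : ℤ) (s : E) :
    Set (Projectivization E (Fin 2 → E)) :=
  {y | ∃ u : E, u - 1 ∈ ν.ball π (min ((k : ℤ) - i) ((k : ℤ) + i)) ∧
    y = onePt (π ^ i * s * u)}

/-- The set of units of `O_E`, i.e. `{s : s ≠ 0 ∧ v s = 0}`. -/
def unitSet (ν : DiscreteVal E) : Set E := {s : E | s ≠ 0 ∧ ν.v s = 0}

/-- The space of `Γ`-orbits on `P¹(E)`. -/
def OrbitSpace (Γ : Set (SpecialLinearGroup (Fin 2) E)) : Type :=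
  Quot (fun x y : Projectivization E (Fin 2 → E) => y ∈ orbitOf Γ x)

/-- The quotient `O_E^×/(1 + π^m O_E)`. -/
def UnitCosets (ν : DiscreteVal E) (π : E) (m : ℤ) : Type :=
  Quot (fun s s' : {s : E // s ≠ 0 ∧ ν.v s = 0} => (s' : E) / (s : E) - 1 ∈ ν.ball π m)

/-- The index set `{∞} ⊔ {0} ⊔ ⨆_{−k<i<k} O_E^×/(1 + π^{min(k−i,k+i)} O_E)`. -/
def OrbitIndex (ν : DiscreteVal E) (π : E) (k : ℕ) : Type :=
  Unit ⊕ Unit ⊕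
    (Σ i : {i : ℤ // -(k : ℤ) < i ∧ i < (k : ℤ)},
      UnitCosets ν π (min ((k : ℤ) - i.1) ((k : ℤ) + i.1)))

end Statement3

/-!
`Γ_k` is a group, so its orbits partition `P¹(E)`, and it contains the unipotents
`t ↦ t + c` and `t ↦ t / (1 + c t)` for `c ∈ π^k O_E`. In the affine chart, `g ∈ Γ_k` acts by
`t ↦ (b + t d) / (a + t c)` with `a, d ≡ 1` and `b, c ≡ 0 mod π^k`. Hence points with
`v(t) ≤ -k` stay near `∞`, points with `v(t) ≥ k` stay near `0`, and for `v(t) = i` with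
`|i| < k` the ratio of the new to the old coordinate is `≡ 1 mod π^{min(k-i, k+i)}`. Conversely
every point of each of these sets is reached from its base point by a single unipotent. The sets
are separated by the valuation and by the class of the unit part, so they are labelled
injectively by the index set, which gives the bijection with the orbit space.
-/

namespace DiscreteVal

variable {E : Type} [Field E] (ν : DiscreteVal E) {π : E}

theorem v_one : ν.v 1 = 0 := by
  have := ν.v_mul 1 1 one_ne_zero one_ne_zero
  rw [mul_one] at this
  omega

theorem v_inv {x : E} (hx : x ≠ 0) : ν.v x⁻¹ = -ν.v x := by
  have := ν.v_mul x x⁻¹ hx (inv_ne_zero hx)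
  rw [mul_inv_cancel₀ hx, v_one] at this
  omega

theorem v_div {a b : E} (ha : a ≠ 0) (hb : b ≠ 0) : ν.v (a / b) = ν.v a - ν.v b := by
  rw [div_eq_mul_inv, ν.v_mul _ _ ha (inv_ne_zero hb), ν.v_inv hb, sub_eq_add_neg]

theorem v_neg {x : E} (hx : x ≠ 0) : ν.v (-x) = ν.v x := by
  have h : ν.v (-1 : E) = 0 := by
    have := ν.v_mul (-1) (-1) (by norm_num) (by norm_num)
    rw [neg_one_mul, neg_neg, v_one] at this
    omega
  rw [← neg_one_mul, ν.v_mul _ _ (by norm_num) hx, h, zero_add]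

theorem v_zpow (hπ : ν.IsUniformizer π) (n : ℤ) : ν.v (π ^ n) = n := by
  induction n using Int.induction_on with
  | zero => simpa using ν.v_one
  | succ n ih =>
    rw [zpow_add_one₀ hπ.1, ν.v_mul _ _ (zpow_ne_zero _ hπ.1) hπ.1, ih, hπ.2]
  | pred n ih =>
    rw [zpow_sub_one₀ hπ.1, ν.v_mul _ _ (zpow_ne_zero _ hπ.1) (inv_ne_zero hπ.1), ih,
      ν.v_inv hπ.1, hπ.2, sub_eq_add_neg]

theorem mem_ball_iff (hπ : ν.IsUniformizer π) {m : ℤ} {y : E} :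
    y ∈ ν.ball π m ↔ y = 0 ∨ m ≤ ν.v y := by
  have hπm : π ^ m ≠ 0 := zpow_ne_zero _ hπ.1
  constructor
  · rintro ⟨z, hz | hz, rfl⟩
    · simp [hz]
    · rcases eq_or_ne z 0 with rfl | hz0
      · simp
      · rw [ν.v_mul _ _ hπm hz0, ν.v_zpow hπ]
        omega
  · intro h
    rcases eq_or_ne y 0 with rfl | hy
    · exact ⟨0, Or.inl rfl, by simp⟩
    refine ⟨π ^ (-m) * y, Or.inr ?_, ?_⟩
    · rw [ν.v_mul _ _ (zpow_ne_zero _ hπ.1) hy, ν.v_zpow hπ]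
      have := h.resolve_left hy
      omega
    · rw [← mul_assoc, ← zpow_add₀ hπ.1, add_neg_cancel, zpow_zero, one_mul]

theorem zero_mem_ball (m : ℤ) : (0 : E) ∈ ν.ball π m := ⟨0, Or.inl rfl, by simp⟩

theorem mem_ball_of_le (hπ : ν.IsUniformizer π) {m : ℤ} {y : E} (h : m ≤ ν.v y) :
    y ∈ ν.ball π m :=
  (ν.mem_ball_iff hπ).2 (Or.inr h)

theorem ball_antitone (hπ : ν.IsUniformizer π) : Antitone (ν.ball π) := by
  intro m m' hm y hy
  rw [ν.mem_ball_iff hπ] at hy ⊢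
  exact hy.imp_right hm.trans

theorem neg_mem_ball (hπ : ν.IsUniformizer π) {m : ℤ} {a : E} (ha : a ∈ ν.ball π m) :
    -a ∈ ν.ball π m := by
  rcases eq_or_ne a 0 with rfl | ha0
  · simpa using ha
  rw [ν.mem_ball_iff hπ] at ha ⊢
  rwa [neg_eq_zero, ν.v_neg ha0]

theorem add_mem_ball (hπ : ν.IsUniformizer π) {m : ℤ} {a b : E}
    (ha : a ∈ ν.ball π m) (hb : b ∈ ν.ball π m) : a + b ∈ ν.ball π m := by
  rcases eq_or_ne a 0 with rfl | ha0
  · simpa using hb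
  rcases eq_or_ne b 0 with rfl | hb0
  · simpa using ha
  rcases eq_or_ne (a + b) 0 with hab | hab
  · rw [hab]; exact ν.zero_mem_ball m
  rw [ν.mem_ball_iff hπ] at ha hb
  exact ν.mem_ball_of_le hπ ((le_min (ha.resolve_left ha0) (hb.resolve_left hb0)).trans
    (ν.v_min_le_add a b ha0 hb0 hab))

theorem sub_mem_ball (hπ : ν.IsUniformizer π) {m : ℤ} {a b : E}
    (ha : a ∈ ν.ball π m) (hb : b ∈ ν.ball π m) : a - b ∈ ν.ball π m := by
  rw [sub_eq_add_neg]
  exact ν.add_mem_ball hπ ha (ν.neg_mem_ball hπ hb)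

theorem mul_mem_ball (hπ : ν.IsUniformizer π) {m n : ℤ} {a b : E}
    (ha : a ∈ ν.ball π m) (hb : b ∈ ν.ball π n) : a * b ∈ ν.ball π (m + n) := by
  rcases eq_or_ne a 0 with rfl | ha0
  · simpa using ν.zero_mem_ball (m + n)
  rcases eq_or_ne b 0 with rfl | hb0
  · simpa using ν.zero_mem_ball (m + n)
  rw [ν.mem_ball_iff hπ] at ha hb
  apply ν.mem_ball_of_le hπ
  rw [ν.v_mul _ _ ha0 hb0]
  exact add_le_add (ha.resolve_left ha0) (hb.resolve_left hb0)

theorem div_mem_ball (hπ : ν.IsUniformizer π) {m : ℤ} {a c : E}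
    (ha : a ∈ ν.ball π (m + ν.v c)) (hc : c ≠ 0) : a / c ∈ ν.ball π m := by
  have hc' : c⁻¹ ∈ ν.ball π (-ν.v c) := ν.mem_ball_of_le hπ (ν.v_inv hc).ge
  simpa [div_eq_mul_inv] using ν.mul_mem_ball hπ ha hc'

theorem mem_unitSet_of_sub_one_mem_ball (hπ : ν.IsUniformizer π) {m : ℤ} {a : E}
    (ha : a - 1 ∈ ν.ball π m) (hm : 1 ≤ m) : a ∈ unitSet ν := by
  rcases eq_or_ne (a - 1) 0 with h | h
  · rw [sub_eq_zero.1 h]; exact ⟨one_ne_zero, ν.v_one⟩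
  have hv : 1 ≤ ν.v (a - 1) := hm.trans (((ν.mem_ball_iff hπ).1 ha).resolve_left h)
  have ha0 : a ≠ 0 := by
    rintro rfl
    rw [zero_sub, ν.v_neg one_ne_zero, ν.v_one] at hv
    omega
  have hle := ν.v_min_le_add 1 (a - 1) one_ne_zero h (by simpa using ha0)
  have hge := ν.v_min_le_add a (-(a - 1)) ha0 (neg_ne_zero.2 h) (by simp)
  rw [ν.v_one, add_sub_cancel] at hle
  rw [ν.v_neg h, show a + -(a - 1) = 1 by ring, ν.v_one] at hge
  exact ⟨ha0, by omega⟩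

theorem mul_sub_one_mem_ball (hπ : ν.IsUniformizer π) {m : ℤ} (hm : 0 ≤ m) {a b : E}
    (ha : a - 1 ∈ ν.ball π m) (hb : b - 1 ∈ ν.ball π m) : a * b - 1 ∈ ν.ball π m := by
  have ha' : a ∈ ν.ball π 0 := by
    simpa using ν.add_mem_ball hπ (ν.ball_antitone hπ hm ha) (ν.mem_ball_of_le hπ ν.v_one.ge)
  rw [show a * b - 1 = a * (b - 1) + (a - 1) by ring]
  exact ν.add_mem_ball hπ (by simpa using ν.mul_mem_ball hπ ha' hb) ha

theorem div_sub_one_mem_ball (hπ : ν.IsUniformizer π) {m : ℤ} (hm : 1 ≤ m) {a b : E}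
    (ha : a - 1 ∈ ν.ball π m) (hb : b - 1 ∈ ν.ball π m) : a / b - 1 ∈ ν.ball π m := by
  obtain ⟨hb0, hbv⟩ := ν.mem_unitSet_of_sub_one_mem_ball hπ hb hm
  rw [div_sub_one hb0, show a - b = (a - 1) - (b - 1) by ring]
  exact ν.div_mem_ball hπ (by simpa [hbv] using ν.sub_mem_ball hπ ha hb) hb0

theorem v_mul_of_mem_unitSet {a u : E} (ha : a ≠ 0) (hu : u ∈ unitSet ν) :
    ν.v (a * u) = ν.v a := by
  rw [ν.v_mul _ _ ha hu.1, hu.2, add_zero]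

end DiscreteVal

section ProjectiveLine

variable {E : Type} [Field E]

theorem projPt_eq_onePt {a b : E} (h : a ≠ 0 ∨ b ≠ 0) (ha : a ≠ 0) :
    projPt a b h = onePt (b / a) := by
  refine (Projectivization.mk_eq_mk_iff' E _ _ _ _).2 ⟨a, ?_⟩
  ext j
  fin_cases j <;> simp [mul_div_cancel₀ _ ha]

theorem projPt_zero_left {b : E} (h : (0 : E) ≠ 0 ∨ b ≠ 0) : projPt 0 b h = inftyPt E :=
  (Projectivization.mk_eq_mk_iff' E _ _ _ _).2 ⟨b, by ext j; fin_cases j <;> simp⟩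

theorem onePt_injective : Function.Injective (onePt : E → Projectivization E (Fin 2 → E)) := by
  intro t t' h
  obtain ⟨c, hc⟩ := (Projectivization.mk_eq_mk_iff' E _ _ _ _).1 h
  have h0 : c = 1 := by simpa using congrFun hc 0
  simpa [h0] using (congrFun hc 1).symm

theorem inftyPt_ne_onePt (t : E) : inftyPt E ≠ onePt t := by
  intro h
  obtain ⟨c, hc⟩ := (Projectivization.mk_eq_mk_iff' E _ _ _ _).1 h
  have h0 : c = 0 := by simpa using congrFun hc 0
  simpa [h0] using congrFun hc 1

theorem eq_inftyPt_or_exists_eq_onePt (x : Projectivization E (Fin 2 → E)) :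
    x = inftyPt E ∨ ∃ t : E, x = onePt t := by
  induction x with
  | h w hw =>
    rcases eq_or_ne (w 0) 0 with h0 | h0
    · refine Or.inl ((Projectivization.mk_eq_mk_iff' E _ _ _ _).2 ⟨w 1, ?_⟩)
      ext j; fin_cases j <;> simp [h0]
    · refine Or.inr ⟨w 1 / w 0, (Projectivization.mk_eq_mk_iff' E _ _ _ _).2 ⟨w 0, ?_⟩⟩
      ext j; fin_cases j <;> simp [mul_div_cancel₀ _ h0]

theorem ract_projPt {a b : E} (h : a ≠ 0 ∨ b ≠ 0) (g : SpecialLinearGroup (Fin 2) E)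
    (h' : a * g.1 0 0 + b * g.1 1 0 ≠ 0 ∨ a * g.1 0 1 + b * g.1 1 1 ≠ 0) :
    ract (projPt a b h) g = projPt _ _ h' := by
  unfold ract projPt
  rw [Projectivization.map_mk]
  congr 1
  ext j
  fin_cases j <;> simp [Matrix.vecMul, dotProduct, Fin.sum_univ_two]

theorem ract_one (x : Projectivization E (Fin 2 → E)) : ract x 1 = x := by
  induction x with
  | h w hw => exact (Projectivization.mk_eq_mk_iff' E _ _ _ _).2 ⟨1, by simp⟩

theorem ract_mul (x : Projectivization E (Fin 2 → E)) (g h : SpecialLinearGroup (Fin 2) E) :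
    ract x (g * h) = ract (ract x g) h := by
  induction x with
  | h w hw =>
    exact (Projectivization.mk_eq_mk_iff' E _ _ _ _).2 ⟨1, by simp [Matrix.vecMul_vecMul]⟩

theorem ract_onePt (t : E) (g : SpecialLinearGroup (Fin 2) E)
    (hA : g.1 0 0 + t * g.1 1 0 ≠ 0) :
    ract (onePt t) g = onePt ((g.1 0 1 + t * g.1 1 1) / (g.1 0 0 + t * g.1 1 0)) := by
  rw [onePt, ract_projPt _ g (Or.inl (by simpa using hA)), projPt_eq_onePt _ (by simpa using hA)]
  simp

theorem ract_inftyPt (g : SpecialLinearGroup (Fin 2) E) (hc : g.1 1 0 ≠ 0) :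
    ract (inftyPt E) g = onePt (g.1 1 1 / g.1 1 0) := by
  rw [inftyPt, ract_projPt _ g (Or.inl (by simpa using hc)), projPt_eq_onePt _ (by simpa using hc)]
  simp

theorem ract_inftyPt_of_eq_zero (g : SpecialLinearGroup (Fin 2) E) (hc : g.1 1 0 = 0) :
    ract (inftyPt E) g = inftyPt E := by
  have hd : g.1 1 1 ≠ 0 := by
    intro hd
    have hdet := g.2
    rw [Matrix.det_fin_two, hc, hd] at hdet
    simp at hdet
  rw [inftyPt, ract_projPt _ g (Or.inr (by simpa using hd))]
  simp only [zero_mul, one_mul, zero_add, hc]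
  exact projPt_zero_left _

end ProjectiveLine

section SubgroupOrbits

variable {E : Type} [Field E] (H : Subgroup (SpecialLinearGroup (Fin 2) E))

theorem mem_orbitOf_self (x : Projectivization E (Fin 2 → E)) : x ∈ orbitOf (H : Set _) x :=
  ⟨1, H.one_mem, (ract_one x).symm⟩

theorem orbitOf_eq_of_mem {x y : Projectivization E (Fin 2 → E)}
    (h : y ∈ orbitOf (H : Set _) x) : orbitOf (H : Set _) y = orbitOf (H : Set _) x := by
  obtain ⟨g, hg, rfl⟩ := h
  ext z
  constructor
  · rintro ⟨g', hg', rfl⟩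
    exact ⟨g * g', H.mul_mem hg hg', (ract_mul x g g').symm⟩
  · rintro ⟨g', hg', rfl⟩
    refine ⟨g⁻¹ * g', H.mul_mem (H.inv_mem hg) hg', ?_⟩
    rw [← ract_mul, ← mul_assoc, mul_inv_cancel, one_mul]

theorem orbitOf_eq_of_mem_of_orbitOf_eq {x y : Projectivization E (Fin 2 → E)}
    {S : Set (Projectivization E (Fin 2 → E))} (hx : orbitOf (H : Set _) x = S) (hy : y ∈ S) :
    orbitOf (H : Set _) y = S :=
  (orbitOf_eq_of_mem H (hx ▸ hy)).trans hx

def OrbitSpace.orbit :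
    OrbitSpace (H : Set (SpecialLinearGroup (Fin 2) E)) → Set (Projectivization E (Fin 2 → E)) :=
  Quot.lift (orbitOf (H : Set _)) fun _ _ h => (orbitOf_eq_of_mem H h).symm

theorem OrbitSpace.orbit_injective : Function.Injective (OrbitSpace.orbit H) := by
  rintro ⟨x⟩ ⟨y⟩ (h : orbitOf _ x = orbitOf _ y)
  exact Quot.sound (h ▸ mem_orbitOf_self H y)

theorem OrbitSpace.range_orbit :
    Set.range (OrbitSpace.orbit H) = Set.range (orbitOf (H : Set _)) :=
  Set.range_quot_lift _

end SubgroupOrbits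

section Unipotent

variable {E : Type} [Field E]

def upperUnipotent (c : E) : SpecialLinearGroup (Fin 2) E :=
  ⟨!![1, c; 0, 1], by simp [Matrix.det_fin_two_of]⟩

def lowerUnipotent (c : E) : SpecialLinearGroup (Fin 2) E :=
  ⟨!![1, 0; c, 1], by simp [Matrix.det_fin_two_of]⟩

theorem ract_onePt_upperUnipotent (t c : E) :
    ract (onePt t) (upperUnipotent c) = onePt (t + c) := by
  rw [ract_onePt _ _ (by simp [upperUnipotent])]
  simp [upperUnipotent, add_comm]

theorem ract_onePt_lowerUnipotent {t c : E} (h : 1 + t * c ≠ 0) :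
    ract (onePt t) (lowerUnipotent c) = onePt (t / (1 + t * c)) := by
  rw [ract_onePt _ _ (by simpa [lowerUnipotent] using h)]
  simp [lowerUnipotent]

theorem ract_inftyPt_lowerUnipotent {c : E} (hc : c ≠ 0) :
    ract (inftyPt E) (lowerUnipotent c) = onePt c⁻¹ := by
  rw [ract_inftyPt _ (by simpa [lowerUnipotent] using hc)]
  simp [lowerUnipotent]

end Unipotent

section CongruenceSubgroup

variable {E : Type} [Field E] {ν : DiscreteVal E} {π : E}

theorem mem_congrSub_iff {k : ℕ} {g : SpecialLinearGroup (Fin 2) E} :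
    g ∈ congrSub ν π k ↔ g.1 0 0 - 1 ∈ ν.ball π k ∧ g.1 0 1 ∈ ν.ball π k ∧
      g.1 1 0 ∈ ν.ball π k ∧ g.1 1 1 - 1 ∈ ν.ball π k := by
  constructor
  · intro h
    exact ⟨by simpa using h 0 0, by simpa using h 0 1, by simpa using h 1 0, by simpa using h 1 1⟩
  · rintro ⟨h00, h01, h10, h11⟩ i j
    fin_cases i <;> fin_cases j <;> simpa

theorem entry_mem_ball_zero (hπ : ν.IsUniformizer π) {k : ℕ} {g : SpecialLinearGroup (Fin 2) E}
    (hg : g ∈ congrSub ν π k) (i j : Fin 2) : g.1 i j ∈ ν.ball π 0 := by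
  have h1 : (1 : Matrix (Fin 2) (Fin 2) E) i j ∈ ν.ball π 0 := by
    rcases eq_or_ne i j with rfl | hij
    · simpa using ν.mem_ball_of_le hπ ν.v_one.ge
    · simpa [Matrix.one_apply_ne hij] using ν.zero_mem_ball 0
  simpa using ν.add_mem_ball hπ (ν.ball_antitone hπ k.cast_nonneg (hg i j)) h1

def congrSubgroup (hπ : ν.IsUniformizer π) (k : ℕ) : Subgroup (SpecialLinearGroup (Fin 2) E) where
  carrier := congrSub ν π k
  one_mem' _ _ := by simpa using ν.zero_mem_ball _
  mul_mem' {g h} hg hh i j := by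
    have key : (g * h).1 - 1 = g.1 * (h.1 - 1) + (g.1 - 1) := by
      change g.1 * h.1 - 1 = _
      noncomm_ring
    rw [← Matrix.sub_apply, key, Matrix.add_apply, Matrix.mul_apply, Fin.sum_univ_two]
    refine ν.add_mem_ball hπ (ν.add_mem_ball hπ ?_ ?_) (hg i j) <;>
      simpa using ν.mul_mem_ball hπ (entry_mem_ball_zero hπ hg _ _) (hh _ j)
  inv_mem' {g} hg := by
    obtain ⟨h00, h01, h10, h11⟩ := mem_congrSub_iff.1 hg
    change g⁻¹ ∈ congrSub ν π k
    rw [mem_congrSub_iff, Matrix.SpecialLinearGroup.SL2_inv_expl g]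
    exact ⟨by simpa using h11, by simpa using ν.neg_mem_ball hπ h01,
      by simpa using ν.neg_mem_ball hπ h10, by simpa using h00⟩

theorem upperUnipotent_mem_congrSub {k : ℕ} {c : E} (hc : c ∈ ν.ball π k) :
    upperUnipotent c ∈ congrSub ν π k :=
  mem_congrSub_iff.2 (by simp [upperUnipotent, hc, ν.zero_mem_ball])

theorem lowerUnipotent_mem_congrSub {k : ℕ} {c : E} (hc : c ∈ ν.ball π k) :
    lowerUnipotent c ∈ congrSub ν π k :=
  mem_congrSub_iff.2 (by simp [lowerUnipotent, hc, ν.zero_mem_ball])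

end CongruenceSubgroup

section Orbits

variable {E : Type} [Field E] {ν : DiscreteVal E} {π : E}

theorem orbitOf_inftyPt (hπ : ν.IsUniformizer π) {k : ℕ} (hk : 1 ≤ k) :
    orbitOf (congrSub ν π k) (inftyPt E) = setA ν k := by
  ext x
  constructor
  · rintro ⟨g, hg, rfl⟩
    obtain ⟨-, -, h10, h11⟩ := mem_congrSub_iff.1 hg
    rcases eq_or_ne (g.1 1 0) 0 with hc | hc
    · exact Or.inl (ract_inftyPt_of_eq_zero g hc)
    obtain ⟨hd0, hdv⟩ := ν.mem_unitSet_of_sub_one_mem_ball hπ h11 (by exact_mod_cast hk)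
    have hcv : (k : ℤ) ≤ ν.v (g.1 1 0) := ((ν.mem_ball_iff hπ).1 h10).resolve_left hc
    refine Or.inr ⟨_, div_ne_zero hd0 hc, ?_, ract_inftyPt g hc⟩
    rw [ν.v_div hd0 hc, hdv]
    omega
  · rintro (rfl | ⟨t, ht0, htv, rfl⟩)
    · exact mem_orbitOf_self (congrSubgroup hπ k) _
    · refine ⟨lowerUnipotent t⁻¹, lowerUnipotent_mem_congrSub (ν.mem_ball_of_le hπ ?_), ?_⟩
      · rw [ν.v_inv ht0]
        omega
      · rw [ract_inftyPt_lowerUnipotent (inv_ne_zero ht0), inv_inv]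

theorem orbitOf_onePt_zero (hπ : ν.IsUniformizer π) {k : ℕ} (hk : 1 ≤ k) :
    orbitOf (congrSub ν π k) (onePt 0) = setB ν π k := by
  ext x
  constructor
  · rintro ⟨g, hg, rfl⟩
    obtain ⟨h00, h01, -, -⟩ := mem_congrSub_iff.1 hg
    obtain ⟨ha0, hav⟩ := ν.mem_unitSet_of_sub_one_mem_ball hπ h00 (by exact_mod_cast hk)
    refine ⟨g.1 0 1 / g.1 0 0, ν.div_mem_ball hπ (by rwa [hav, add_zero]) ha0, ?_⟩
    rw [ract_onePt 0 g (by simpa using ha0)]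
    simp
  · rintro ⟨t, ht, rfl⟩
    refine ⟨upperUnipotent t, upperUnipotent_mem_congrSub ht, ?_⟩
    rw [ract_onePt_upperUnipotent, zero_add]

theorem ract_mem_setC (hπ : ν.IsUniformizer π) {k : ℕ} {i : ℤ} (hi : -(k : ℤ) < i)
    (hi' : i < k) {s : E} (hs : s ∈ unitSet ν) {g : SpecialLinearGroup (Fin 2) E}
    (hg : g ∈ congrSub ν π k) : ract (onePt (π ^ i * s)) g ∈ setC ν π k i s := by
  set m := min ((k : ℤ) - i) ((k : ℤ) + i)
  set w := π ^ i * s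
  have hw0 : w ≠ 0 := mul_ne_zero (zpow_ne_zero _ hπ.1) hs.1
  have hwv : ν.v w = i := by
    rw [ν.v_mul_of_mem_unitSet (zpow_ne_zero _ hπ.1) hs, ν.v_zpow hπ]
  have hwb : w ∈ ν.ball π i := ν.mem_ball_of_le hπ hwv.ge
  have shrink {n : ℤ} {y : E} (hy : y ∈ ν.ball π n) (hn : m + i ≤ n) : y ∈ ν.ball π (m + i) :=
    ν.ball_antitone hπ hn hy
  obtain ⟨h00, h01, h10, h11⟩ := mem_congrSub_iff.1 hg
  set A := g.1 0 0 + w * g.1 1 0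
  set B := g.1 0 1 + w * g.1 1 1
  -- `[1 : w] · g = [A : B]` with `A ≡ 1 mod π^m` and `B ≡ A w mod π^(m + i)`
  have hA : A - 1 ∈ ν.ball π m := by
    rw [show A - 1 = (g.1 0 0 - 1) + w * g.1 1 0 by ring]
    exact ν.add_mem_ball hπ (ν.ball_antitone hπ (by omega) h00)
      (ν.ball_antitone hπ (by omega) (ν.mul_mem_ball hπ hwb h10))
  obtain ⟨hA0, hAv⟩ := ν.mem_unitSet_of_sub_one_mem_ball hπ hA (by omega)
  have hB : B - A * w ∈ ν.ball π (m + i) := by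
    rw [show B - A * w = g.1 0 1 + w * (g.1 1 1 - 1) - w * (g.1 0 0 - 1) - w * w * g.1 1 0 by ring]
    refine ν.sub_mem_ball hπ (ν.sub_mem_ball hπ (ν.add_mem_ball hπ ?_ ?_) ?_) ?_
    · exact shrink h01 (by omega)
    · exact shrink (ν.mul_mem_ball hπ hwb h11) (by omega)
    · exact shrink (ν.mul_mem_ball hπ hwb h00) (by omega)
    · exact shrink (ν.mul_mem_ball hπ (ν.mul_mem_ball hπ hwb hwb) h10) (by omega)
  refine ⟨B / A / w, ?_, ?_⟩
  · rw [div_div, div_sub_one (mul_ne_zero hA0 hw0)]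
    refine ν.div_mem_ball hπ ?_ (mul_ne_zero hA0 hw0)
    rwa [ν.v_mul _ _ hA0 hw0, hAv, hwv, zero_add]
  · rw [ract_onePt _ g hA0, mul_div_cancel₀ _ hw0]

theorem setC_subset_orbitOf (hπ : ν.IsUniformizer π) {k : ℕ} {i : ℤ} (hi : -(k : ℤ) < i)
    {s : E} (hs : s ∈ unitSet ν) :
    setC ν π k i s ⊆ orbitOf (congrSub ν π k) (onePt (π ^ i * s)) := by
  rintro _ ⟨u, hu, rfl⟩
  set m := min ((k : ℤ) - i) ((k : ℤ) + i)
  set w := π ^ i * s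
  have hw0 : w ≠ 0 := mul_ne_zero (zpow_ne_zero _ hπ.1) hs.1
  have hwv : ν.v w = i := by
    rw [ν.v_mul_of_mem_unitSet (zpow_ne_zero _ hπ.1) hs, ν.v_zpow hπ]
  rcases le_or_gt 0 i with hi0 | hi0
  · refine ⟨upperUnipotent (w * (u - 1)), upperUnipotent_mem_congrSub ?_, ?_⟩
    · exact ν.ball_antitone hπ (by omega) (ν.mul_mem_ball hπ (ν.mem_ball_of_le hπ hwv.ge) hu)
    · rw [ract_onePt_upperUnipotent]
      ring_nf
  · -- `w (u - 1)` need not lie in `π^k O`; use `t ↦ t / (1 + c t)` with `1 + c w = u⁻¹`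
    obtain ⟨hu0, -⟩ := ν.mem_unitSet_of_sub_one_mem_ball hπ hu (by omega)
    have hu' : u⁻¹ - 1 ∈ ν.ball π m := by
      simpa using ν.div_sub_one_mem_ball hπ (by omega)
        (by simpa using ν.zero_mem_ball (π := π) m : (1 : E) - 1 ∈ ν.ball π m) hu
    have h1 : 1 + w * ((u⁻¹ - 1) / w) = u⁻¹ := by
      rw [mul_div_cancel₀ _ hw0]
      ring
    refine ⟨lowerUnipotent ((u⁻¹ - 1) / w), lowerUnipotent_mem_congrSub ?_, ?_⟩
    · exact ν.div_mem_ball hπ (ν.ball_antitone hπ (by omega) hu') hw0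
    · rw [ract_onePt_lowerUnipotent (by rw [h1]; exact inv_ne_zero hu0), h1, div_inv_eq_mul]

theorem orbitOf_onePt_zpow_mul (hπ : ν.IsUniformizer π) {k : ℕ} {i : ℤ} (hi : -(k : ℤ) < i)
    (hi' : i < k) {s : E} (hs : s ∈ unitSet ν) :
    orbitOf (congrSub ν π k) (onePt (π ^ i * s)) = setC ν π k i s := by
  refine (Set.Subset.antisymm ?_ (setC_subset_orbitOf hπ hi hs))
  rintro _ ⟨g, hg, rfl⟩
  exact ract_mem_setC hπ hi hi' hs hg

end Orbits

section OrbitSets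

variable {E : Type} [Field E] {ν : DiscreteVal E} {π : E}

theorem exists_eq_onePt_of_mem_setC (hπ : ν.IsUniformizer π) {k : ℕ} {i : ℤ}
    (hi : -(k : ℤ) < i) (hi' : i < k) {s : E} (hs : s ∈ unitSet ν)
    {x : Projectivization E (Fin 2 → E)} (hx : x ∈ setC ν π k i s) :
    ∃ t : E, t ≠ 0 ∧ ν.v t = i ∧ x = onePt t := by
  obtain ⟨u, hu, rfl⟩ := hx
  have hu' := ν.mem_unitSet_of_sub_one_mem_ball hπ hu (by omega)
  have hw0 : π ^ i * s ≠ 0 := mul_ne_zero (zpow_ne_zero _ hπ.1) hs.1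
  refine ⟨_, mul_ne_zero hw0 hu'.1, ?_, rfl⟩
  rw [ν.v_mul_of_mem_unitSet hw0 hu', ν.v_mul_of_mem_unitSet (zpow_ne_zero _ hπ.1) hs,
    ν.v_zpow hπ]

theorem setA_disjoint_setB (hπ : ν.IsUniformizer π) {k : ℕ} (hk : 1 ≤ k) :
    Disjoint (setA ν k) (setB ν π k) := by
  rw [Set.disjoint_left]
  rintro _ (rfl | ⟨t, ht0, htv, rfl⟩) ⟨t', ht', h⟩
  · exact inftyPt_ne_onePt t' h
  · obtain rfl := onePt_injective h
    have := ((ν.mem_ball_iff hπ).1 ht').resolve_left ht0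
    omega

theorem setA_disjoint_setC (hπ : ν.IsUniformizer π) {k : ℕ} {i : ℤ} (hi : -(k : ℤ) < i)
    (hi' : i < k) {s : E} (hs : s ∈ unitSet ν) : Disjoint (setA ν k) (setC ν π k i s) := by
  rw [Set.disjoint_left]
  intro x hxA hxC
  obtain ⟨t, -, htv, rfl⟩ := exists_eq_onePt_of_mem_setC hπ hi hi' hs hxC
  rcases hxA with h | ⟨t', -, ht'v, h⟩
  · exact inftyPt_ne_onePt t h.symm
  · obtain rfl := onePt_injective h
    omega

theorem setB_disjoint_setC (hπ : ν.IsUniformizer π) {k : ℕ} {i : ℤ} (hi : -(k : ℤ) < i)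
    (hi' : i < k) {s : E} (hs : s ∈ unitSet ν) : Disjoint (setB ν π k) (setC ν π k i s) := by
  rw [Set.disjoint_left]
  rintro _ ⟨t', ht', rfl⟩ hxC
  obtain ⟨t, ht0, htv, h⟩ := exists_eq_onePt_of_mem_setC hπ hi hi' hs hxC
  obtain rfl := onePt_injective h
  have := ((ν.mem_ball_iff hπ).1 ht').resolve_left ht0
  omega

theorem eq_and_div_sub_one_mem_ball_of_setC_inter_nonempty (hπ : ν.IsUniformizer π) {k : ℕ}
    {i i' : ℤ} (hi : -(k : ℤ) < i) (hi' : i < k) (hj : -(k : ℤ) < i') (hj' : i' < k)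
    {s s' : E} (hs : s ∈ unitSet ν) (hs' : s' ∈ unitSet ν)
    (h : (setC ν π k i s ∩ setC ν π k i' s').Nonempty) :
    i = i' ∧ s' / s - 1 ∈ ν.ball π (min ((k : ℤ) - i) ((k : ℤ) + i)) := by
  obtain ⟨x, hx, hx'⟩ := h
  have hii' : i = i' := by
    obtain ⟨t, -, htv, rfl⟩ := exists_eq_onePt_of_mem_setC hπ hi hi' hs hx
    obtain ⟨t', -, ht'v, h⟩ := exists_eq_onePt_of_mem_setC hπ hj hj' hs' hx'
    rw [← htv, ← ht'v, onePt_injective h]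
  subst hii'
  obtain ⟨u, hu, rfl⟩ := hx
  obtain ⟨u', hu', h⟩ := hx'
  have hsu : s * u = s' * u' := by
    rw [mul_assoc, mul_assoc] at h
    exact mul_left_cancel₀ (zpow_ne_zero _ hπ.1) (onePt_injective h)
  have hu'0 := (ν.mem_unitSet_of_sub_one_mem_ball hπ hu' (by omega)).1
  rw [show s' / s = u / u' by rw [div_eq_div_iff hs.1 hu'0]; linear_combination -hsu]
  exact ⟨rfl, ν.div_sub_one_mem_ball hπ (by omega) hu hu'⟩

theorem setC_subset_setC (hπ : ν.IsUniformizer π) {k : ℕ} {i : ℤ} (hi : -(k : ℤ) < i)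
    (hi' : i < k) {s s' : E} (hs : s ∈ unitSet ν)
    (h : s' / s - 1 ∈ ν.ball π (min ((k : ℤ) - i) ((k : ℤ) + i))) :
    setC ν π k i s' ⊆ setC ν π k i s := by
  rintro _ ⟨u, hu, rfl⟩
  refine ⟨s' / s * u, ν.mul_sub_one_mem_ball hπ (by omega) h hu, ?_⟩
  rw [mul_assoc, mul_assoc, ← mul_assoc s, mul_div_cancel₀ _ hs.1]

theorem setC_eq_setC (hπ : ν.IsUniformizer π) {k : ℕ} {i : ℤ} (hi : -(k : ℤ) < i)
    (hi' : i < k) {s s' : E} (hs : s ∈ unitSet ν) (hs' : s' ∈ unitSet ν)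
    (h : s' / s - 1 ∈ ν.ball π (min ((k : ℤ) - i) ((k : ℤ) + i))) :
    setC ν π k i s = setC ν π k i s' := by
  have h' : s / s' - 1 ∈ ν.ball π (min ((k : ℤ) - i) ((k : ℤ) + i)) := by
    have := ν.div_sub_one_mem_ball hπ (by omega)
      (by simpa using ν.zero_mem_ball (π := π) _ : (1 : E) - 1 ∈ _) h
    rwa [one_div_div] at this
  exact (setC_subset_setC hπ hi hi' hs' h').antisymm (setC_subset_setC hπ hi hi' hs h)

theorem setA_union_setB_union_setC_eq_univ (hπ : ν.IsUniformizer π) (k : ℕ) :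
    (setA ν k ∪ setB ν π k ∪
      ⋃ i ∈ Set.Ioo (-(k : ℤ)) (k : ℤ), ⋃ s ∈ unitSet ν, setC ν π k i s) = Set.univ := by
  refine Set.eq_univ_of_forall fun x => ?_
  simp only [Set.mem_union, Set.mem_iUnion]
  rcases eq_inftyPt_or_exists_eq_onePt x with rfl | ⟨t, rfl⟩
  · exact Or.inl (Or.inl (Or.inl rfl))
  rcases eq_or_ne t 0 with rfl | ht0
  · exact Or.inl (Or.inr ⟨0, ν.zero_mem_ball _, rfl⟩)
  rcases le_or_gt (ν.v t) (-k) with hlow | hlow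
  · exact Or.inl (Or.inl (Or.inr ⟨t, ht0, hlow, rfl⟩))
  rcases le_or_gt (k : ℤ) (ν.v t) with hhigh | hhigh
  · exact Or.inl (Or.inr ⟨t, ν.mem_ball_of_le hπ hhigh, rfl⟩)
  -- `t = π^{v t} · (t / π^{v t})` with the second factor a unit
  have hp0 : π ^ ν.v t ≠ 0 := zpow_ne_zero _ hπ.1
  refine Or.inr ⟨ν.v t, ⟨hlow, hhigh⟩, t / π ^ ν.v t, ⟨div_ne_zero ht0 hp0, ?_⟩,
    1, by simpa using ν.zero_mem_ball _, ?_⟩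
  · rw [ν.v_div ht0 hp0, ν.v_zpow hπ, sub_self]
  · rw [mul_one, mul_div_cancel₀ _ hp0]

end OrbitSets

section Classification

variable {E : Type} [Field E] {ν : DiscreteVal E} {π : E}

theorem orbitOf_eq_setA_or_setB_or_setC (hπ : ν.IsUniformizer π) {k : ℕ} (hk : 1 ≤ k)
    (x : Projectivization E (Fin 2 → E)) :
    orbitOf (congrSub ν π k) x = setA ν k ∨ orbitOf (congrSub ν π k) x = setB ν π k ∨
      ∃ i : ℤ, -(k : ℤ) < i ∧ i < (k : ℤ) ∧ ∃ s ∈ unitSet ν,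
        orbitOf (congrSub ν π k) x = setC ν π k i s := by
  have hx := (setA_union_setB_union_setC_eq_univ hπ k).symm ▸ Set.mem_univ x
  simp only [Set.mem_union, Set.mem_iUnion] at hx
  rcases hx with (hA | hB) | ⟨i, ⟨hi, hi'⟩, s, hs, hC⟩
  · exact Or.inl (orbitOf_eq_of_mem_of_orbitOf_eq (congrSubgroup hπ k) (orbitOf_inftyPt hπ hk) hA)
  · exact Or.inr (Or.inl
      (orbitOf_eq_of_mem_of_orbitOf_eq (congrSubgroup hπ k) (orbitOf_onePt_zero hπ hk) hB))
  · exact Or.inr (Or.inr ⟨i, hi, hi', s, hs, orbitOf_eq_of_mem_of_orbitOf_eq (congrSubgroup hπ k)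
      (orbitOf_onePt_zpow_mul hπ hi hi' hs) hC⟩)

def orbitIndexSet (hπ : ν.IsUniformizer π) (k : ℕ) :
    OrbitIndex ν π k → Set (Projectivization E (Fin 2 → E))
  | .inl _ => setA ν k
  | .inr (.inl _) => setB ν π k
  | .inr (.inr ⟨⟨i, hi, hi'⟩, q⟩) =>
    Quot.lift (fun s : {s : E // s ≠ 0 ∧ ν.v s = 0} => setC ν π k i s.1)
      (fun s s' h => setC_eq_setC hπ hi hi' s.2 s'.2 h) q

theorem range_orbitIndexSet (hπ : ν.IsUniformizer π) {k : ℕ} (hk : 1 ≤ k) :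
    Set.range (orbitIndexSet hπ k) = Set.range (orbitOf (congrSub ν π k)) := by
  ext S
  constructor
  · rintro ⟨_ | _ | ⟨⟨i, hi, hi'⟩, ⟨s⟩⟩, rfl⟩
    · exact ⟨_, orbitOf_inftyPt hπ hk⟩
    · exact ⟨_, orbitOf_onePt_zero hπ hk⟩
    · exact ⟨_, orbitOf_onePt_zpow_mul hπ hi hi' s.2⟩
  · rintro ⟨x, rfl⟩
    rcases orbitOf_eq_setA_or_setB_or_setC hπ hk x with h | h | ⟨i, hi, hi', s, hs, h⟩
    · exact ⟨.inl (), h.symm⟩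
    · exact ⟨.inr (.inl ()), h.symm⟩
    · exact ⟨.inr (.inr ⟨⟨i, hi, hi'⟩, Quot.mk _ ⟨s, hs⟩⟩), h.symm⟩

theorem orbitIndexSet_nonempty (hπ : ν.IsUniformizer π) {k : ℕ} (a : OrbitIndex ν π k) :
    (orbitIndexSet hπ k a).Nonempty := by
  rcases a with _ | _ | ⟨⟨i, hi, hi'⟩, ⟨s⟩⟩
  · exact ⟨inftyPt E, Or.inl rfl⟩
  · exact ⟨onePt 0, 0, ν.zero_mem_ball _, rfl⟩
  · exact ⟨onePt (π ^ i * s.1), 1, by simpa using ν.zero_mem_ball _, by rw [mul_one]⟩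

theorem eq_of_mem_orbitIndexSet (hπ : ν.IsUniformizer π) {k : ℕ} (hk : 1 ≤ k)
    {a b : OrbitIndex ν π k} {x : Projectivization E (Fin 2 → E)}
    (ha : x ∈ orbitIndexSet hπ k a) (hb : x ∈ orbitIndexSet hπ k b) : a = b := by
  rcases a with _ | _ | ⟨⟨i, hi, hi'⟩, ⟨s⟩⟩ <;> rcases b with _ | _ | ⟨⟨j, hj, hj'⟩, ⟨s'⟩⟩
  · rfl
  · exact (Set.disjoint_left.1 (setA_disjoint_setB hπ hk) ha hb).elim
  · exact (Set.disjoint_left.1 (setA_disjoint_setC hπ hj hj' s'.2) ha hb).elim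
  · exact (Set.disjoint_left.1 (setA_disjoint_setB hπ hk) hb ha).elim
  · rfl
  · exact (Set.disjoint_left.1 (setB_disjoint_setC hπ hj hj' s'.2) ha hb).elim
  · exact (Set.disjoint_left.1 (setA_disjoint_setC hπ hi hi' s.2) hb ha).elim
  · exact (Set.disjoint_left.1 (setB_disjoint_setC hπ hi hi' s.2) hb ha).elim
  · obtain ⟨rfl, h⟩ := eq_and_div_sub_one_mem_ball_of_setC_inter_nonempty hπ hi hi' hj hj'
      s.2 s'.2 ⟨x, ha, hb⟩
    exact congrArg (fun q : UnitCosets ν π _ => (.inr (.inr ⟨⟨i, hi, hi'⟩, q⟩) : OrbitIndex ν π k))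
      (Quot.sound h)

theorem orbitIndexSet_injective (hπ : ν.IsUniformizer π) {k : ℕ} (hk : 1 ≤ k) :
    Function.Injective (orbitIndexSet hπ k) := by
  intro a b h
  obtain ⟨x, hx⟩ := orbitIndexSet_nonempty hπ a
  exact eq_of_mem_orbitIndexSet hπ hk hx (h ▸ hx)

def orbitSpaceEquivOrbitIndex (hπ : ν.IsUniformizer π) {k : ℕ} (hk : 1 ≤ k) :
    OrbitSpace (congrSub ν π k) ≃ OrbitIndex ν π k :=
  (Equiv.ofInjective _ (OrbitSpace.orbit_injective (congrSubgroup hπ k))).trans <|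
    (Equiv.setCongr ((OrbitSpace.range_orbit _).trans (range_orbitIndexSet hπ hk).symm)).trans
      (Equiv.ofInjective _ (orbitIndexSet_injective hπ hk)).symm

end Classification

section

variable {E : Type} [Field E]

theorem congrSub_orbit_classification
    (ν : DiscreteVal E) (π : E) (hπ : ν.IsUniformizer π) (k : ℕ) (hk : 1 ≤ k) :
    -- (a), (b), (c) are the orbits of `∞`, `[1:0]` and the `[1 : π^i s]`
    orbitOf (congrSub ν π k) (inftyPt E) = setA ν k ∧
    orbitOf (congrSub ν π k) (onePt (0 : E)) = setB ν π k ∧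
    (∀ i : ℤ, -(k : ℤ) < i → i < (k : ℤ) → ∀ s ∈ unitSet ν,
      orbitOf (congrSub ν π k) (onePt (π ^ i * s)) = setC ν π k i s) ∧
    -- every `Γ_k`-orbit is one of these sets
    (∀ x : Projectivization E (Fin 2 → E),
      orbitOf (congrSub ν π k) x = setA ν k ∨
      orbitOf (congrSub ν π k) x = setB ν π k ∨
      ∃ i : ℤ, -(k : ℤ) < i ∧ i < (k : ℤ) ∧ ∃ s ∈ unitSet ν,
        orbitOf (congrSub ν π k) x = setC ν π k i s) ∧
    -- the sets cover `P¹(E)`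
    (setA ν k ∪ setB ν π k ∪
      ⋃ i ∈ Set.Ioo (-(k : ℤ)) (k : ℤ), ⋃ s ∈ unitSet ν, setC ν π k i s) = Set.univ ∧
    -- pairwise disjointness
    Disjoint (setA ν k) (setB ν π k) ∧
    (∀ i : ℤ, -(k : ℤ) < i → i < (k : ℤ) → ∀ s ∈ unitSet ν,
      Disjoint (setA ν k) (setC ν π k i s) ∧ Disjoint (setB ν π k) (setC ν π k i s)) ∧
    (∀ i i' : ℤ, -(k : ℤ) < i → i < (k : ℤ) → -(k : ℤ) < i' → i' < (k : ℤ) →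
      ∀ s ∈ unitSet ν, ∀ s' ∈ unitSet ν,
        (setC ν π k i s ∩ setC ν π k i' s').Nonempty →
          i = i' ∧ s' / s - 1 ∈ ν.ball π (min ((k : ℤ) - i) ((k : ℤ) + i))) ∧
    -- the set (c) depends only on the coset of `s`
    (∀ i : ℤ, -(k : ℤ) < i → i < (k : ℤ) → ∀ s ∈ unitSet ν, ∀ s' ∈ unitSet ν,
      s' / s - 1 ∈ ν.ball π (min ((k : ℤ) - i) ((k : ℤ) + i)) →
        setC ν π k i s = setC ν π k i s') ∧
    -- consequently, the orbit space is in bijection with the index set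
    Nonempty (OrbitSpace (congrSub ν π k) ≃ OrbitIndex ν π k) := by
  refine ⟨orbitOf_inftyPt hπ hk, orbitOf_onePt_zero hπ hk,
    fun i hi hi' s hs => orbitOf_onePt_zpow_mul hπ hi hi' hs,
    orbitOf_eq_setA_or_setB_or_setC hπ hk,
    setA_union_setB_union_setC_eq_univ hπ k,
    setA_disjoint_setB hπ hk,
    fun i hi hi' s hs => ⟨setA_disjoint_setC hπ hi hi' hs, setB_disjoint_setC hπ hi hi' hs⟩,
    fun i i' hi hi' hj hj' s hs s' hs' h =>
      eq_and_div_sub_one_mem_ball_of_setC_inter_nonempty hπ hi hi' hj hj' hs hs' h,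
    fun i hi hi' s hs s' hs' h => setC_eq_setC hπ hi hi' hs hs' h,
    ⟨orbitSpaceEquivOrbitIndex hπ hk⟩⟩

end
end
end

section
/- Let k ≥ 1 be an integer. The orbit of the point ∞ = [0 : 1] under the right action of the principal congruence subgroup Γ_k on P^1(E) is exactly the set {∞} ∪ {[1 : t] : t ∈ E^×, v(t) ≤ −k}. -/
noncomputable section

open Matrix

/-!
STATEMENT 4: For `k ≥ 1`, the orbit of `∞ = [0 : 1]` under the right action of the
principal congruence subgroup `Γ_k` on `P¹(E)` is exactly
`{∞} ∪ {[1 : t] : t ∈ E^×, v(t) ≤ −k}`.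
-/


section Helpers

variable {E : Type} [Field E] (ν : DiscreteVal E)

lemma aux_v_one : ν.v 1 = 0 := by
  have h := ν.v_mul 1 1 one_ne_zero one_ne_zero
  rw [one_mul] at h
  omega

lemma aux_v_neg_one : ν.v (-1 : E) = 0 := by
  have h := ν.v_mul (-1) (-1) (by norm_num) (by norm_num)
  rw [neg_mul_neg, one_mul, aux_v_one] at h
  omega

lemma aux_v_neg (x : E) (hx : x ≠ 0) : ν.v (-x) = ν.v x := by
  have h := ν.v_mul (-1) x (by norm_num) hx
  rw [neg_one_mul, aux_v_neg_one] at h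
  omega

lemma aux_v_inv (x : E) (hx : x ≠ 0) : ν.v x⁻¹ = -ν.v x := by
  have h := ν.v_mul x x⁻¹ hx (inv_ne_zero hx)
  rw [mul_inv_cancel₀ hx, aux_v_one] at h
  omega

lemma aux_v_pow {π : E} (hπ : ν.IsUniformizer π) (n : ℕ) : ν.v (π ^ n) = n := by
  induction n with
  | zero => simpa using aux_v_one ν
  | succ m ih =>
    have h := ν.v_mul (π ^ m) π (pow_ne_zero m hπ.1) hπ.1
    rw [← pow_succ] at h
    rw [h, ih, hπ.2]
    push_cast
    ring

lemma aux_mem_ball {π : E} (hπ : ν.IsUniformizer π) (x : E) (k : ℕ) :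
    x ∈ ν.ball π (k : ℤ) ↔ x = 0 ∨ (k : ℤ) ≤ ν.v x := by
  constructor
  · rintro ⟨z, hz, rfl⟩
    rcases hz with rfl | hz
    · exact Or.inl (by simp)
    · by_cases hz0 : z = 0
      · exact Or.inl (by simp [hz0])
      · right
        have hp : (π : E) ^ (k : ℤ) = π ^ k := zpow_natCast π k
        rw [hp]
        have h := ν.v_mul (π ^ k) z (pow_ne_zero k hπ.1) hz0
        rw [h, aux_v_pow ν hπ k]
        omega
  · rintro (rfl | hv)
    · exact ⟨0, Or.inl rfl, by simp⟩
    · by_cases hx0 : x = 0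
      · exact ⟨0, Or.inl rfl, by simp [hx0]⟩
      · refine ⟨x * (π ^ k)⁻¹, Or.inr ?_, ?_⟩
        · have h := ν.v_mul x (π ^ k)⁻¹ hx0 (inv_ne_zero (pow_ne_zero k hπ.1))
          rw [h, aux_v_inv ν _ (pow_ne_zero k hπ.1), aux_v_pow ν hπ k]
          omega
        · rw [zpow_natCast, ← mul_assoc, mul_comm (π ^ k) x, mul_assoc,
            mul_inv_cancel₀ (pow_ne_zero k hπ.1), mul_one]

lemma aux_unit {π : E} (hπ : ν.IsUniformizer π) {d : E} {k : ℕ} (hk : 1 ≤ k)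
    (h : d - 1 ∈ ν.ball π (k : ℤ)) : d ≠ 0 ∧ ν.v d = 0 := by
  rw [aux_mem_ball ν hπ] at h
  by_cases he0 : d - 1 = 0
  · have hd : d = 1 := by
      have := sub_eq_zero.mp he0
      simpa using this
    exact ⟨hd ▸ one_ne_zero, by rw [hd, aux_v_one]⟩
  rcases h with h | h
  · exact absurd h he0
  · have hd0 : d ≠ 0 := by
      intro h0
      rw [h0] at h
      rw [show (0 : E) - 1 = -1 by ring, aux_v_neg_one] at h
      omega
    have h1 : d = 1 + (d - 1) := by ring
    have hlow : min (ν.v 1) (ν.v (d - 1)) ≤ ν.v d := by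
      have := ν.v_min_le_add 1 (d - 1) one_ne_zero he0 (by rw [← h1]; exact hd0)
      rwa [← h1] at this
    have hup : min (ν.v d) (ν.v (-(d - 1))) ≤ ν.v 1 := by
      have := ν.v_min_le_add d (-(d - 1)) hd0 (neg_ne_zero.mpr he0)
        (by rw [show d + -(d-1) = 1 by ring]; exact one_ne_zero)
      rwa [show d + -(d-1) = 1 by ring] at this
    rw [aux_v_one] at hlow hup
    rw [aux_v_neg ν _ he0] at hup
    constructor
    · exact hd0
    · omega

end Helpers

theorem congrSub_orbit_of_infty
    {E : Type} [Field E] (ν : DiscreteVal E) (π : E) (hπ : ν.IsUniformizer π)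
    (k : ℕ) (hk : 1 ≤ k) :
    orbitOf (congrSub ν π k) (inftyPt E) =
      {inftyPt E} ∪ {y | ∃ t : E, t ≠ 0 ∧ ν.v t ≤ -(k : ℤ) ∧ y = onePt t} := by
  ext y
  constructor
  · rintro ⟨g, hg, rfl⟩
    set a := g.1 1 0 with ha
    set d := g.1 1 1 with hd
    have hga : a ∈ ν.ball π (k : ℤ) := by
      have := hg 1 0
      simpa [Matrix.one_apply] using this
    have hgd : d ≠ 0 ∧ ν.v d = 0 := by
      refine aux_unit ν hπ hk ?_
      have := hg 1 1
      simpa [Matrix.one_apply] using this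
    rw [aux_mem_ball ν hπ] at hga
    have hvec : (g.1.vecMulLinear) ![0, 1] = ![a, d] := by
      funext j
      fin_cases j <;>
        simp [Matrix.vecMulLinear_apply, Matrix.vecMul, dotProduct,
          Fin.sum_univ_two, ha, hd]
    by_cases ha0 : a = 0
    · left
      show _ = inftyPt E
      rw [ract, inftyPt, projPt, Projectivization.map_mk]
      rw [Projectivization.mk_eq_mk_iff']
      refine ⟨d, ?_⟩
      rw [hvec]
      funext j
      fin_cases j <;> simp [ha0]
    · right
      refine ⟨d * a⁻¹, mul_ne_zero hgd.1 (inv_ne_zero ha0), ?_, ?_⟩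
      · rw [ν.v_mul d a⁻¹ hgd.1 (inv_ne_zero ha0), hgd.2, aux_v_inv ν a ha0]
        rcases hga with h | h
        · exact absurd h ha0
        · omega
      · show _ = onePt _
        rw [ract, inftyPt, onePt, projPt, projPt, Projectivization.map_mk]
        rw [Projectivization.mk_eq_mk_iff']
        refine ⟨a, ?_⟩
        rw [hvec]
        funext j
        fin_cases j <;> simp [smul_eq_mul]
        rw [mul_comm d a⁻¹, ← mul_assoc, mul_inv_cancel₀ ha0, one_mul]
  · rintro (h | ⟨t, ht0, htv, rfl⟩)
    · refine ⟨1, ?_, ?_⟩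
      · intro i j
        simp only [Matrix.SpecialLinearGroup.coe_one, sub_self]
        exact ⟨0, Or.inl rfl, by simp⟩
      · rw [Set.mem_singleton_iff] at h
        rw [h, ract, inftyPt, projPt, Projectivization.map_mk]
        congr 1
        funext j
        fin_cases j <;>
          simp [Matrix.vecMulLinear_apply, Matrix.vecMul, dotProduct,
            Fin.sum_univ_two, Matrix.one_apply]
    · have hs0 : t⁻¹ ≠ 0 := inv_ne_zero ht0
      have hvs : (k : ℤ) ≤ ν.v t⁻¹ := by
        rw [aux_v_inv ν t ht0]; omega
      refine ⟨⟨!![1, 0; t⁻¹, 1], by simp [Matrix.det_fin_two_of]⟩, ?_, ?_⟩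
      · intro i j
        fin_cases i <;> fin_cases j <;>
          simp only [Matrix.cons_val', Matrix.cons_val_zero, Matrix.cons_val_one,
            Matrix.head_cons, Matrix.head_fin_const, Matrix.empty_val',
            Matrix.cons_val_fin_one, Matrix.one_apply, Matrix.of_apply] <;>
          rw [aux_mem_ball ν hπ]
        · left; norm_num
        · left; norm_num
        · right
          simpa using hvs
        · left; norm_num
      · unfold ract
        rw [inftyPt, onePt, projPt, projPt, Projectivization.map_mk]
        rw [Projectivization.mk_eq_mk_iff']
        refine ⟨t, ?_⟩
        funext j
        fin_cases j <;>
          simp [Matrix.vecMulLinear_apply, Matrix.vecMul, dotProduct,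
            Fin.sum_univ_two, smul_eq_mul, mul_inv_cancel₀ ht0]
end
end
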